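/- The Petersen graph is hypohamiltonian. -/

import Mathlib

open SimpleGraph

/-- A graph is hypohamiltonian if it is not Hamiltonian, but deleting any vertex
gives a Hamiltonian graph. -/
def SimpleGraph.IsHypohamiltonian {V : Type*} [Fintype V] [DecidableEq V]
    (G : SimpleGraph V) : Prop :=
  ¬ G.IsHamiltonian ∧ ∀ v : V, (G.induce {u | u ≠ v}).IsHamiltonian

/-- The Petersen graph: vertices are the 2-element subsets of a 5-element set,
adjacent iff disjoint. -/
def petersenGraph : SimpleGraph {s : Finset (Fin 5) // s.card = 2} where
  Adj a b := Disjoint a.1 b.1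
  symm := ⟨fun _ _ h => h.symm⟩
  loopless := ⟨fun a h => by
    have hb := disjoint_self.mp h
    have h2 := a.2
    simp [hb] at h2⟩

/-!
The symmetric group `S₅` acts on the Petersen graph by automorphisms, transitively on vertices,
so it suffices to exhibit a single 9-cycle avoiding the vertex `{0, 1}`. Non-Hamiltonicity is
certified by an exhaustive depth-first search for closed walks of length 10 with no repeated
vertex, which is proved to find every Hamiltonian cycle.
-/

namespace SimpleGraph

section Hamiltonian

variable {V W : Type*} [DecidableEq V] [DecidableEq W] {G : SimpleGraph V} {H : SimpleGraph W}

theorem Iso.isHamiltonian [Fintype V] [Fintype W] (e : G ≃g H) (hG : G.IsHamiltonian) :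
    H.IsHamiltonian := by
  intro hH
  obtain ⟨a, p, hp⟩ := hG (Fintype.card_congr e.toEquiv ▸ hH)
  exact ⟨e a, p.map e.toHom, hp.map e.bijective⟩

theorem isHamiltonian_induce_of_isCycle {s : Set V} [Fintype s] {a : V} {p : G.Walk a a}
    (hp : p.IsCycle) (hps : ∀ x ∈ p.support, x ∈ s) (hlen : p.length = Fintype.card s) :
    (G.induce s).IsHamiltonian := fun _ ↦ by
  refine ⟨_, p.induce s hps, Walk.isHamiltonianCycle_iff_isCycle_and_length_eq.mpr ⟨?_, ?_⟩⟩
  · refine (Walk.isCycle_map_iff_of_injective (f := (Embedding.induce s).toHom)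
      (Embedding.induce (G := G) s).injective).mp ?_
    simpa using hp
  · have := congrArg List.length (p.support_induce hps)
    simp only [Walk.length_support, List.length_attachWith] at this
    omega

theorem Iso.isHamiltonian_induce_ne [Fintype V] (φ : G ≃g G) {v : V}
    (hv : (G.induce {u | u ≠ v}).IsHamiltonian) : (G.induce {u | u ≠ φ v}).IsHamiltonian := by
  refine (φ.induce (s := {u | u ≠ v}) (t := {u | u ≠ φ v})
    ⟨?_, φ.injective.injOn, ?_⟩).isHamiltonian hv
  · exact fun _ hu ↦ φ.injective.ne hu
  · exact fun w hw ↦ ⟨φ.symm w, fun h ↦ hw (by simp [← h]), by simp⟩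

theorem isHypohamiltonian_of_forall_exists_iso [Fintype V] (v : V) (hG : ¬G.IsHamiltonian)
    (hv : (G.induce {u | u ≠ v}).IsHamiltonian) (htrans : ∀ w, ∃ φ : G ≃g G, φ v = w) :
    G.IsHypohamiltonian := by
  refine ⟨hG, fun w ↦ ?_⟩
  obtain ⟨φ, rfl⟩ := htrans w
  exact φ.isHamiltonian_induce_ne hv

end Hamiltonian

section Search

variable {V : Type*} [Fintype V] [DecidableEq V] (G : SimpleGraph V) [DecidableRel G.Adj]

def searchWalk (target : V) : ℕ → V → List V → Bool
  | 0, cur, _ => cur = target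
  | n + 1, cur, visited =>
    decide (∃ u, G.Adj cur u ∧ u ∉ visited ∧ searchWalk target n u (u :: visited))

theorem searchWalk_length_eq_true {target cur : V} (p : G.Walk cur target) (visited : List V)
    (hp : p.support.tail.Nodup) (hvisited : ∀ x ∈ p.support.tail, x ∉ visited) :
    G.searchWalk target p.length cur visited = true := by
  induction p generalizing visited with
  | nil => simp [searchWalk]
  | @cons cur u _ hadj p ih =>
    rw [Walk.support_cons, List.tail_cons, ← Walk.cons_tail_support, List.nodup_cons] at hp
    have hu : u ∉ visited := hvisited u (by simp)
    have htail : ∀ x ∈ p.support.tail, x ∉ u :: visited := by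
      intro x hx hxv
      rcases List.mem_cons.mp hxv with rfl | hxv
      · exact hp.1 hx
      · exact hvisited x (by simp [List.mem_of_mem_tail hx]) hxv
    simpa [searchWalk] using ⟨u, hadj, hu, ih (u :: visited) hp.2 htail⟩

theorem not_isHamiltonian_of_searchWalk_eq_false [Nontrivial V] (v : V)
    (h : G.searchWalk v (Fintype.card V) v [] = false) : ¬G.IsHamiltonian := by
  intro hG
  obtain ⟨p, hp⟩ := hG.exists_isHamiltonianCycle v
  have := G.searchWalk_length_eq_true p [] hp.support_nodup (by simp)
  rw [hp.length_eq] at this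
  simp [this] at h

end Search

end SimpleGraph

namespace petersenGraph

abbrev Vertex := {s : Finset (Fin 5) // s.card = 2}

instance : DecidableRel petersenGraph.Adj := fun a b =>
  inferInstanceAs (Decidable (Disjoint a.1 b.1))

open scoped Pointwise in
def permIso (σ : Equiv.Perm (Fin 5)) : petersenGraph ≃g petersenGraph where
  toFun v := ⟨σ • v.1, by rw [Finset.card_smul_finset, v.2]⟩
  invFun v := ⟨σ⁻¹ • v.1, by rw [Finset.card_smul_finset, v.2]⟩
  left_inv v := by simp
  right_inv v := by simp
  map_rel_iff' := by
    simp [petersenGraph, Finset.smul_finset_def, Finset.disjoint_image σ.injective]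

theorem exists_permIso_apply_eq (v w : Vertex) : ∃ σ, permIso σ v = w := by
  obtain ⟨σ, hσ⟩ := (Set.powersetCard.isPretransitive (α := Fin 5) (n := 2)).exists_smul_eq
    ⟨v.1, v.2⟩ ⟨w.1, w.2⟩
  have := congrArg Subtype.val hσ
  rw [Set.powersetCard.coe_smul] at this
  exact ⟨σ, Subtype.ext this⟩

def pair (a b : Fin 5) (h : a ≠ b := by decide) : Vertex := ⟨{a, b}, Finset.card_pair h⟩

instance : Nontrivial Vertex := ⟨pair 0 1, pair 0 2, by decide⟩

def nineCycle : petersenGraph.Walk (pair 0 2) (pair 0 2) :=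
  .cons (v := pair 1 3) (by decide) <| .cons (v := pair 2 4) (by decide) <|
  .cons (v := pair 0 3) (by decide) <| .cons (v := pair 1 4) (by decide) <|
  .cons (v := pair 2 3) (by decide) <| .cons (v := pair 0 4) (by decide) <|
  .cons (v := pair 1 2) (by decide) <| .cons (v := pair 3 4) (by decide) <|
  .cons (v := pair 0 2) (by decide) .nil

theorem isHamiltonian_induce_ne_pair_zero_one :
    (petersenGraph.induce {u | u ≠ pair 0 1}).IsHamiltonian :=
  isHamiltonian_induce_of_isCycle (p := nineCycle)
    (by rw [nineCycle, Walk.cons_isCycle_iff, Walk.isPath_def]; decide) (by decide) (by decide)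

set_option maxRecDepth 10000 in
theorem not_isHamiltonian : ¬petersenGraph.IsHamiltonian :=
  not_isHamiltonian_of_searchWalk_eq_false _ (pair 0 1) (by decide)

end petersenGraph

open petersenGraph in
/-- The Petersen graph is hypohamiltonian. -/
theorem petersenGraph_isHypohamiltonian : petersenGraph.IsHypohamiltonian :=
  isHypohamiltonian_of_forall_exists_iso (pair 0 1) not_isHamiltonian
    isHamiltonian_induce_ne_pair_zero_one fun w ↦
      let ⟨σ, hσ⟩ := exists_permIso_apply_eq (pair 0 1) w
      ⟨permIso σ, hσ⟩
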